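/- arXiv:1801.09075 — 5 statements merged into one kernel-verified Lean document; each statement's English description precedes it below -/
import Mathlib

section
/- Let G = G₁:G₂ be a multigraph that is the union of two multigraphs G₁ and G₂ having exactly two vertices u and v in common and no common edges. Let K₁ and K₂ be the multigraphs obtained from G₁ and G₂, respectively, by identifying the vertices u and v. Then for every nonzero complex number A, with σ = A + 1 + A^{−1}, one has σ·H(G₁:G₂)(A) = H(K₁)(A)·H(K₂)(A) + (σ+1)·H(G₁)(A)·H(G₂)(A) + H(K₁)(A)·H(G₂)(A) + H(K₂)(A)·H(G₁)(A). -/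
/-- A multigraph: a finite vertex set `V`, a finite edge set `E`, and a map assigning
to each edge an unordered pair of (not necessarily distinct) endpoints in `V`;
loops and multiple edges are allowed. -/
structure Multigraph where
  V : Type
  E : Type
  [finV : Finite V]
  [fintypeE : Fintype E]
  [decE : DecidableEq E]
  ends : E → Sym2 V

attribute [instance] Multigraph.finV Multigraph.fintypeE Multigraph.decE

namespace Multigraph

/-- `μ`: the number of connected components of the spanning subgraph of `G`
with edge set `S`. -/
noncomputable def mu (G : Multigraph) (S : Finset G.E) : ℕ :=
  Nat.card (Quot (fun x y : G.V => ∃ e ∈ S, G.ends e = s(x, y)))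

/-- `β`: the first Betti number `|S| − |V| + μ` of the spanning subgraph of `G`
with edge set `S`. -/
noncomputable def betti (G : Multigraph) (S : Finset G.E) : ℕ :=
  S.card + G.mu S - Nat.card G.V

/-- The Yamada polynomial of `G` evaluated at a nonzero complex number `A`:
`H(G)(A) = Σ_{F ⊆ E(G)} (−1)^{|F| + μ(G−F)} (−A − 2 − A⁻¹)^{β(G−F)}`. -/
noncomputable def yamada (G : Multigraph) (A : ℂ) : ℂ :=
  ∑ F : Finset G.E, (-1 : ℂ) ^ (F.card + G.mu Fᶜ) * (-A - 2 - A⁻¹) ^ (G.betti Fᶜ)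

/-- `G` is connected: the whole graph has exactly one connected component. -/
def Connected (G : Multigraph) : Prop := G.mu Finset.univ = 1

end Multigraph

/-- The multigraph obtained from `G` by identifying the vertices `u` and `v`
(keeping all edges; an edge with endpoints `u` and `v` becomes a loop). -/
def Multigraph.identify (G : Multigraph) (u v : G.V) : Multigraph where
  V := Quot (fun x y : G.V => x = u ∧ y = v)
  E := G.E
  ends := fun e => (G.ends e).map (Quot.mk _)

/-- The union `G₁:G₂` of two multigraphs `G₁` and `G₂` having exactly the two vertices
`u₁ = u₂` and `v₁ = v₂` in common and no common edges. -/
def Multigraph.glue (G₁ G₂ : Multigraph) (u₁ v₁ : G₁.V) (u₂ v₂ : G₂.V) : Multigraph where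
  V := Quot (fun x y : G₁.V ⊕ G₂.V =>
    (x = Sum.inl u₁ ∧ y = Sum.inr u₂) ∨ (x = Sum.inl v₁ ∧ y = Sum.inr v₂))
  E := G₁.E ⊕ G₂.E
  ends := fun e =>
    Sum.elim (fun e₁ => (G₁.ends e₁).map (fun x => Quot.mk _ (Sum.inl x)))
             (fun e₂ => (G₂.ends e₂).map (fun x => Quot.mk _ (Sum.inr x))) e


/-!
Split the Yamada state sum of `G` according to whether `u` and `v` remain connected in `G − F`,
let `a(G)` be the part where they do, and put `t = −A − 2 − A⁻¹ = −(σ + 1)`.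
Identifying `u` and `v` removes one vertex; in the states of `a(G)` it keeps the number of
components, so `β` grows by one, and in the others it removes a component, which flips the sign.
Hence `H(K) = (t + 1) a(G) − H(G)`.
A state of `G₁:G₂` is a pair of states of `G₁` and `G₂`, and gluing loses two vertices and two
components, or only one component when both halves connect `u` to `v`.
Hence `H(G₁:G₂) = H(G₁) H(G₂) − (t + 1) a(G₁) a(G₂)`, and eliminating `a(G₁)`, `a(G₂)` gives the
identity. All component counts come from one fact: merging two classes of a finite quotient lowers
its size by one, unless the two classes already coincide.
-/

open Finset

open scoped Classical

namespace Relation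

variable {α β : Type*}

def pairRel (x y : α) : α → α → Prop := fun a b => a = x ∧ b = y

noncomputable def collapse (x y a : α) : α := if a = y then x else a

theorem mk_collapse (x y a : α) :
    Quot.mk (pairRel x y) (collapse x y a) = Quot.mk _ a := by
  unfold collapse
  split_ifs with h
  · exact Quot.sound ⟨rfl, h⟩
  · rfl

theorem mk_pairRel_eq_iff {x y a b : α} :
    Quot.mk (pairRel x y) a = Quot.mk _ b ↔ collapse x y a = collapse x y b := by
  refine ⟨fun h => ?_, fun h => by rw [← mk_collapse x y a, h, mk_collapse]⟩
  have hc : ∀ a b, pairRel x y a b → collapse x y a = collapse x y b := by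
    rintro a b ⟨rfl, rfl⟩
    simp [collapse]
  exact congrArg (Quot.lift (collapse x y) hc) h

theorem card_quot_pairRel [Finite α] (x y : α) :
    Nat.card (Quot (pairRel x y)) + (if x = y then 0 else 1) = Nat.card α := by
  split_ifs with hxy
  · subst hxy
    have hinj : Function.Injective (Quot.mk (pairRel x x)) := fun a b h => by
      have := mk_pairRel_eq_iff.1 h
      unfold collapse at this
      split_ifs at this <;> simp_all
    simpa using (Nat.card_eq_of_bijective _ ⟨hinj, Quot.mk_surjective⟩).symm
  · have hbij : Function.Bijective fun a : {a // a ≠ y} => Quot.mk (pairRel x y) a.1 := by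
      refine ⟨fun a b h => Subtype.ext ?_, fun q => ?_⟩
      · simpa [collapse, a.2, b.2] using mk_pairRel_eq_iff.1 h
      · obtain ⟨a, rfl⟩ := Quot.mk_surjective q
        refine ⟨⟨collapse x y a, ?_⟩, mk_collapse x y a⟩
        unfold collapse
        split_ifs <;> assumption
    rw [← Nat.card_eq_of_bijective _ hbij, ← Finite.card_option,
      Nat.card_congr (Equiv.optionSubtypeNe y)]

def quotSupEquiv (p r : α → α → Prop) :
    Quot (p ⊔ r) ≃ Quot (Relation.Map p (Quot.mk r) (Quot.mk r)) where
  toFun := Quot.lift (fun a => Quot.mk _ (Quot.mk r a)) <| by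
    rintro a b (h | h)
    · exact Quot.sound ⟨a, b, h, rfl, rfl⟩
    · exact congrArg _ (Quot.sound h)
  invFun := Quot.lift (Quot.lift (Quot.mk _) fun a b h => Quot.sound (Or.inr h)) <| by
    rintro _ _ ⟨a, b, h, rfl, rfl⟩
    exact Quot.sound (Or.inl h)
  left_inv := by rintro ⟨a⟩; rfl
  right_inv := by rintro ⟨⟨a⟩⟩; rfl

def quotLiftRelEquiv (r₁ : α → α → Prop) (r₂ : β → β → Prop) :
    Quot (Sum.LiftRel r₁ r₂) ≃ Quot r₁ ⊕ Quot r₂ where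
  toFun := Quot.lift (Sum.map (Quot.mk r₁) (Quot.mk r₂)) <| by
    rintro _ _ (h | h)
    · exact congrArg Sum.inl (Quot.sound h)
    · exact congrArg Sum.inr (Quot.sound h)
  invFun := Sum.elim
    (Quot.lift (fun a => Quot.mk _ (Sum.inl a)) fun _ _ h => Quot.sound (.inl h))
    (Quot.lift (fun b => Quot.mk _ (Sum.inr b)) fun _ _ h => Quot.sound (.inr h))
  left_inv := by rintro ⟨a | b⟩ <;> rfl
  right_inv := by rintro (q | q) <;> induction q using Quot.ind <;> rfl

theorem map_pairRel (f : α → β) (x y : α) :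
    Relation.Map (pairRel x y) f f = pairRel (f x) (f y) := by
  ext c d
  simp [Relation.Map, pairRel, eq_comm]

theorem map_sup (p q : α → α → Prop) (f : α → β) :
    Relation.Map (p ⊔ q) f f = Relation.Map p f f ⊔ Relation.Map q f f := by
  ext c d
  simp [Relation.Map, or_and_right, exists_or]

theorem card_quot_pairRel_sup [Finite α] (r : α → α → Prop) (x y : α) :
    Nat.card (Quot (pairRel x y ⊔ r)) + (if Quot.mk r x = Quot.mk r y then 0 else 1) =
      Nat.card (Quot r) := by
  rw [Nat.card_congr (quotSupEquiv _ r), map_pairRel]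
  exact card_quot_pairRel _ _

theorem card_quot_pairRel_inl_inr_sup [Finite α] [Finite β] (a a' : α) (b b' : β) :
    Nat.card (Quot (pairRel (Sum.inl a) (Sum.inr b) ⊔ pairRel (Sum.inl a') (Sum.inr b'))) +
        (if a = a' ∧ b = b' then 1 else 2) = Nat.card α + Nat.card β := by
  have hjoin : Quot.mk (pairRel (Sum.inl a') (Sum.inr b')) (Sum.inl a) = Quot.mk _ (Sum.inr b) ↔
      a = a' ∧ b = b' := by
    rw [mk_pairRel_eq_iff]
    by_cases hb : b = b' <;> simp [collapse, hb]
  have hfirst := card_quot_pairRel_sup (pairRel (Sum.inl a') (Sum.inr b')) (Sum.inl a) (Sum.inr b)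
  have hsecond := card_quot_pairRel (Sum.inl a' : α ⊕ β) (Sum.inr b')
  rw [Nat.card_sum] at hsecond
  simp only [hjoin, reduceCtorEq, if_false] at hfirst hsecond
  split_ifs at hfirst ⊢ <;> omega

end Relation

section StateWeight

variable (t : ℂ)

-- The summand `(−1)^(|F| + μ) t^β` of the Yamada state sum, with `n = |F|`, `s = |E ∖ F|`,
-- `m = μ(G − F)` and `N = |V|`, so that `β = s + m − N`.
noncomputable def stateWeight (n s m N : ℕ) : ℂ := (-1) ^ (n + m) * t ^ (s + m - N)

theorem stateWeight_of_identify {n s m m' N N' : ℕ} (c : Prop) [Decidable c]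
    (hm : m' + (if c then 0 else 1) = m) (hN : N' + 1 = N) (hle : N ≤ s + m) :
    stateWeight t n s m' N' =
      if c then t * stateWeight t n s m N else -stateWeight t n s m N := by
  unfold stateWeight
  split_ifs at hm ⊢
  · rw [← hm, add_zero, show s + m' - N' = s + m' - N + 1 by omega]
    ring
  · rw [← hm, show s + m' - N' = s + (m' + 1) - N by omega]
    ring

theorem stateWeight_of_glue {n₁ n₂ s₁ s₂ m₁ m₂ m N₁ N₂ N : ℕ} (c : Prop) [Decidable c]
    (hm : m + (if c then 1 else 2) = m₁ + m₂) (hN : N + 2 = N₁ + N₂)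
    (hle₁ : N₁ ≤ s₁ + m₁) (hle₂ : N₂ ≤ s₂ + m₂) :
    stateWeight t (n₁ + n₂) (s₁ + s₂) m N =
      (if c then -t else 1) * (stateWeight t n₁ s₁ m₁ N₁ * stateWeight t n₂ s₂ m₂ N₂) := by
  unfold stateWeight
  split_ifs at hm ⊢
  · have hsign : (-1 : ℂ) ^ (n₁ + m₁) * (-1) ^ (n₂ + m₂) = -(-1) ^ (n₁ + n₂ + m) := by
      rw [← pow_add, show n₁ + m₁ + (n₂ + m₂) = n₁ + n₂ + m + 1 by omega, pow_succ]
      ring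
    rw [show s₁ + s₂ + m - N = (s₁ + m₁ - N₁) + (s₂ + m₂ - N₂) + 1 by omega]
    linear_combination t ^ ((s₁ + m₁ - N₁) + (s₂ + m₂ - N₂) + 1) * hsign
  · have hsign : (-1 : ℂ) ^ (n₁ + m₁) * (-1) ^ (n₂ + m₂) = (-1) ^ (n₁ + n₂ + m) := by
      rw [← pow_add, show n₁ + m₁ + (n₂ + m₂) = n₁ + n₂ + m + 2 by omega, pow_add]
      ring
    rw [show s₁ + s₂ + m - N = (s₁ + m₁ - N₁) + (s₂ + m₂ - N₂) by omega]
    linear_combination -t ^ ((s₁ + m₁ - N₁) + (s₂ + m₂ - N₂)) * hsign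

end StateWeight

namespace Multigraph

open Relation

section Components

variable (G : Multigraph)

def edgeRel (S : Finset G.E) : G.V → G.V → Prop := fun a b => ∃ e ∈ S, G.ends e = s(a, b)

theorem mu_eq_card (S : Finset G.E) : G.mu S = Nat.card (Quot (G.edgeRel S)) := rfl

def Reachable (S : Finset G.E) (u v : G.V) : Prop :=
  Quot.mk (G.edgeRel S) u = Quot.mk _ v

theorem exists_map_ends_iff {W : Type*} (S : Finset G.E) (f : G.V → W) (c d : W) :
    (∃ e ∈ S, (G.ends e).map f = s(c, d)) ↔ Relation.Map (G.edgeRel S) f f c d := by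
  constructor
  · rintro ⟨e, he, hcd⟩
    induction hab : G.ends e using Sym2.ind generalizing c d with | h a b
    rw [hab, Sym2.map_mk, Sym2.eq_iff] at hcd
    rcases hcd with ⟨rfl, rfl⟩ | ⟨rfl, rfl⟩
    · exact ⟨a, b, ⟨e, he, hab⟩, rfl, rfl⟩
    · exact ⟨b, a, ⟨e, he, hab.trans Sym2.eq_swap⟩, rfl, rfl⟩
  · rintro ⟨a, b, ⟨e, he, hab⟩, rfl, rfl⟩
    exact ⟨e, he, by rw [hab, Sym2.map_mk]⟩

theorem mu_le_mu_insert (e : G.E) (S : Finset G.E) : G.mu S ≤ G.mu (insert e S) + 1 := by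
  induction hcd : G.ends e using Sym2.ind with | h c d
  let merge : Quot (G.edgeRel (insert e S)) → Quot (pairRel c d ⊔ G.edgeRel S) :=
    Quot.lift (Quot.mk _) <| by
      rintro a b ⟨e', he', hab⟩
      rcases mem_insert.1 he' with rfl | he'
      · rcases Sym2.eq_iff.1 (hcd.symm.trans hab) with ⟨rfl, rfl⟩ | ⟨rfl, rfl⟩
        · exact Quot.sound (Or.inl ⟨rfl, rfl⟩)
        · exact Eq.symm (Quot.sound (Or.inl ⟨rfl, rfl⟩))
      · exact Quot.sound (Or.inr ⟨e', he', hab⟩)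
  have hmerge : Function.Surjective merge := Quot.ind fun a => ⟨Quot.mk _ a, rfl⟩
  have hle := Nat.card_le_card_of_surjective merge hmerge
  have hcount := card_quot_pairRel_sup (G.edgeRel S) c d
  rw [mu_eq_card, mu_eq_card]
  split_ifs at hcount <;> omega

theorem card_le_card_add_mu (S : Finset G.E) : Nat.card G.V ≤ #S + G.mu S := by
  induction S using Finset.induction_on with
  | empty =>
    have hinj : Function.Injective (Quot.mk (G.edgeRel ∅)) := fun a b h =>
      congrArg (Quot.lift id fun _ _ ⟨_, he, _⟩ => absurd he (notMem_empty _)) h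
    simpa [mu_eq_card] using Nat.card_le_card_of_injective _ hinj
  | insert e S he ih =>
    have := G.mu_le_mu_insert e S
    rw [card_insert_of_notMem he]
    omega

theorem identify_edgeRel (u v : G.V) (S : Finset G.E) :
    (G.identify u v).edgeRel S =
      Relation.Map (G.edgeRel S) (Quot.mk (pairRel u v)) (Quot.mk (pairRel u v)) := by
  ext c d
  exact G.exists_map_ends_iff S _ c d

theorem mu_identify (u v : G.V) (S : Finset G.E) :
    (G.identify u v).mu S + (if G.Reachable S u v then 0 else 1) = G.mu S := by
  have h := card_quot_pairRel_sup (G.edgeRel S) u v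
  rwa [sup_comm, Nat.card_congr (quotSupEquiv _ _), ← identify_edgeRel] at h

theorem card_identify {u v : G.V} (h : u ≠ v) :
    Nat.card (G.identify u v).V + 1 = Nat.card G.V := by
  have hcount := card_quot_pairRel u v
  rwa [if_neg h] at hcount

end Components

section Glue

variable {G₁ G₂ : Multigraph} {u₁ v₁ : G₁.V} {u₂ v₂ : G₂.V}

theorem mu_glue_eq_card (S : Finset (G₁.E ⊕ G₂.E)) :
    (glue G₁ G₂ u₁ v₁ u₂ v₂).mu S =
      Nat.card (Quot (Relation.Map (Sum.LiftRel (G₁.edgeRel S.toLeft) (G₂.edgeRel S.toRight))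
        (Quot.mk (pairRel (Sum.inl u₁) (Sum.inr u₂) ⊔ pairRel (Sum.inl v₁) (Sum.inr v₂)))
        (Quot.mk (pairRel (Sum.inl u₁) (Sum.inr u₂) ⊔ pairRel (Sum.inl v₁) (Sum.inr v₂))))) := by
  refine Nat.card_congr (Quot.congrRight fun c d => ?_)
  constructor
  · rintro ⟨e₁ | e₂, he, hcd⟩
    · obtain ⟨a, b, hab, rfl, rfl⟩ :=
        (G₁.exists_map_ends_iff S.toLeft _ c d).1 ⟨e₁, mem_toLeft.2 he, hcd⟩
      exact ⟨_, _, .inl hab, rfl, rfl⟩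
    · obtain ⟨a, b, hab, rfl, rfl⟩ :=
        (G₂.exists_map_ends_iff S.toRight _ c d).1 ⟨e₂, mem_toRight.2 he, hcd⟩
      exact ⟨_, _, .inr hab, rfl, rfl⟩
  · rintro ⟨_, _, hab | hab, rfl, rfl⟩
    · obtain ⟨e, he, hcd⟩ :=
        (G₁.exists_map_ends_iff S.toLeft (fun x => Quot.mk _ (Sum.inl x)) _ _).2
          ⟨_, _, hab, rfl, rfl⟩
      exact ⟨.inl e, mem_toLeft.1 he, hcd⟩
    · obtain ⟨e, he, hcd⟩ :=
        (G₂.exists_map_ends_iff S.toRight (fun x => Quot.mk _ (Sum.inr x)) _ _).2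
          ⟨_, _, hab, rfl, rfl⟩
      exact ⟨.inr e, mem_toRight.1 he, hcd⟩

theorem mu_glue (S : Finset (G₁.E ⊕ G₂.E)) :
    (glue G₁ G₂ u₁ v₁ u₂ v₂).mu S +
        (if G₁.Reachable S.toLeft u₁ v₁ ∧ G₂.Reachable S.toRight u₂ v₂ then 1 else 2) =
      G₁.mu S.toLeft + G₂.mu S.toRight := by
  -- Take the components of `G₁ − S` and `G₂ − S` first, then glue `u₁` to `u₂` and `v₁` to `v₂`.
  rw [mu_glue_eq_card, ← Nat.card_congr (quotSupEquiv _ _), sup_comm,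
    Nat.card_congr (quotSupEquiv _ _),
    Nat.card_congr (Quot.congr (quotLiftRelEquiv _ _) fun a b =>
      (map_apply_apply (Equiv.injective _) (Equiv.injective _) _ a b).symm),
    Relation.map_map, map_sup, map_pairRel, map_pairRel]
  exact card_quot_pairRel_inl_inr_sup (Quot.mk _ u₁) (Quot.mk _ v₁) (Quot.mk _ u₂) (Quot.mk _ v₂)

theorem card_glue (h₁ : u₁ ≠ v₁) :
    Nat.card (glue G₁ G₂ u₁ v₁ u₂ v₂).V + 2 = Nat.card G₁.V + Nat.card G₂.V := by
  have hcount := card_quot_pairRel_inl_inr_sup u₁ v₁ u₂ v₂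
  rwa [if_neg (fun h => h₁ h.1)] at hcount

end Glue

section StateSum

variable (t : ℂ)

noncomputable def stateTerm (G : Multigraph) (F : Finset G.E) : ℂ :=
  stateWeight t #F #Fᶜ (G.mu Fᶜ) (Nat.card G.V)

noncomputable def stateSum (G : Multigraph) : ℂ := ∑ F, G.stateTerm t F

noncomputable def reachableStateSum (G : Multigraph) (u v : G.V) : ℂ :=
  ∑ F, if G.Reachable Fᶜ u v then G.stateTerm t F else 0

theorem yamada_eq_stateSum (G : Multigraph) (A : ℂ) :
    G.yamada A = G.stateSum (-A - 2 - A⁻¹) := rfl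

theorem stateTerm_identify (G : Multigraph) {u v : G.V} (h : u ≠ v) (F : Finset G.E) :
    (G.identify u v).stateTerm t F =
      if G.Reachable Fᶜ u v then t * G.stateTerm t F else -G.stateTerm t F :=
  stateWeight_of_identify t _ (G.mu_identify u v Fᶜ) (G.card_identify h)
    (G.card_le_card_add_mu Fᶜ)

theorem stateSum_identify (G : Multigraph) {u v : G.V} (h : u ≠ v) :
    (G.identify u v).stateSum t = (t + 1) * G.reachableStateSum t u v - G.stateSum t := by
  rw [stateSum, stateSum, reachableStateSum, mul_sum, ← sum_sub_distrib]
  refine sum_congr rfl fun F _ => (stateTerm_identify t G h F).trans ?_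
  split_ifs <;> ring

variable {G₁ G₂ : Multigraph} {u₁ v₁ : G₁.V} {u₂ v₂ : G₂.V}

theorem stateTerm_glue (h₁ : u₁ ≠ v₁) (F₁ : Finset G₁.E) (F₂ : Finset G₂.E) :
    (glue G₁ G₂ u₁ v₁ u₂ v₂).stateTerm t (F₁.disjSum F₂) =
      (if G₁.Reachable F₁ᶜ u₁ v₁ ∧ G₂.Reachable F₂ᶜ u₂ v₂ then -t else 1) *
        (G₁.stateTerm t F₁ * G₂.stateTerm t F₂) := by
  have hcompl : (F₁.disjSum F₂)ᶜ = F₁ᶜ.disjSum F₂ᶜ := by ext (x | x) <;> simp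
  have hmu := mu_glue (u₁ := u₁) (v₁ := v₁) (u₂ := u₂) (v₂ := v₂) (F₁ᶜ.disjSum F₂ᶜ)
  rw [toLeft_disjSum, toRight_disjSum] at hmu
  change stateWeight t #(F₁.disjSum F₂) #((F₁.disjSum F₂)ᶜ : Finset (G₁.E ⊕ G₂.E))
    ((glue G₁ G₂ u₁ v₁ u₂ v₂).mu ((F₁.disjSum F₂)ᶜ : Finset (G₁.E ⊕ G₂.E))) _ = _
  rw [hcompl, card_disjSum, card_disjSum]
  exact stateWeight_of_glue t _ hmu (card_glue h₁) (G₁.card_le_card_add_mu F₁ᶜ)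
    (G₂.card_le_card_add_mu F₂ᶜ)

theorem stateSum_glue (h₁ : u₁ ≠ v₁) :
    (glue G₁ G₂ u₁ v₁ u₂ v₂).stateSum t =
      G₁.stateSum t * G₂.stateSum t -
        (t + 1) * (G₁.reachableStateSum t u₁ v₁ * G₂.reachableStateSum t u₂ v₂) := by
  refine (Fintype.sum_equiv sumEquiv.toEquiv _
    (fun p => (glue G₁ G₂ u₁ v₁ u₂ v₂).stateTerm t (p.1.disjSum p.2))
    fun F => congrArg _ toLeft_disjSum_toRight.symm).trans ?_
  simp only [Fintype.sum_prod_type, stateTerm_glue t h₁]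
  rw [stateSum, stateSum, reachableStateSum, reachableStateSum, sum_mul_sum, sum_mul_sum, mul_sum,
    ← sum_sub_distrib]
  refine sum_congr rfl fun F₁ _ => ?_
  rw [mul_sum, ← sum_sub_distrib]
  refine sum_congr rfl fun F₂ _ => ?_
  rw [ite_and]
  split_ifs <;> ring

end StateSum

end Multigraph

theorem yamada_two_vertex_union_general (G₁ G₂ : Multigraph) (u₁ v₁ : G₁.V) (u₂ v₂ : G₂.V)
    (h₁ : u₁ ≠ v₁) (h₂ : u₂ ≠ v₂)
    (A : ℂ) (σ : ℂ) (hσ : σ = A + 1 + A⁻¹) :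
    σ * (Multigraph.glue G₁ G₂ u₁ v₁ u₂ v₂).yamada A =
      (G₁.identify u₁ v₁).yamada A * (G₂.identify u₂ v₂).yamada A +
        (σ + 1) * (G₁.yamada A * G₂.yamada A) +
        (G₁.identify u₁ v₁).yamada A * G₂.yamada A +
        (G₂.identify u₂ v₂).yamada A * G₁.yamada A := by
  simp only [Multigraph.yamada_eq_stateSum, Multigraph.stateSum_glue _ h₁,
    Multigraph.stateSum_identify _ _ h₁, Multigraph.stateSum_identify _ _ h₂]
  rw [hσ]
  ring

/-- Let `G₁:G₂` be the union of two multigraphs with exactly two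
vertices `u`, `v` in common and no common edges, and let `K₁`, `K₂` be obtained
from `G₁`, `G₂` by identifying `u` and `v`.  Then for all nonzero `A`, with
`σ = A + 1 + A⁻¹`:
`σ·H(G₁:G₂) = H(K₁)H(K₂) + (σ+1)H(G₁)H(G₂) + H(K₁)H(G₂) + H(K₂)H(G₁)`. -/
theorem yamada_two_vertex_union (G₁ G₂ : Multigraph) (u₁ v₁ : G₁.V) (u₂ v₂ : G₂.V)
    (h₁ : u₁ ≠ v₁) (h₂ : u₂ ≠ v₂)
    (A : ℂ) (hA : A ≠ 0) (σ : ℂ) (hσ : σ = A + 1 + A⁻¹) :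
    σ * (Multigraph.glue G₁ G₂ u₁ v₁ u₂ v₂).yamada A =
      (G₁.identify u₁ v₁).yamada A * (G₂.identify u₂ v₂).yamada A +
        (σ + 1) * (G₁.yamada A * G₂.yamada A) +
        (G₁.identify u₁ v₁).yamada A * G₂.yamada A +
        (G₂.identify u₂ v₂).yamada A * G₁.yamada A :=
  yamada_two_vertex_union_general G₁ G₂ u₁ v₁ u₂ v₂ h₁ h₂ A σ hσ
end

section
/- Let Θ_s be the multigraph with two distinct vertices joined by s ≥ 1 parallel edges, with edges labelled by elements a_1, a_2, …, a_s of a commutative ring, and let w be a ring element. Then (1−w)·Ch(Θ_s) = Π_{i=1}^{s}(a_i − w) − w·Π_{i=1}^{s}(a_i − 1). -/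
/-- The chain polynomial of a multigraph `G` with edge labels `ℓ` in a commutative
ring, evaluated at `w`:
`Ch(G) = Σ_{Y ⊆ E} F_{G−Y}(1−w) · Π_{a∈Y} ℓ(a)`, where
`F_{G−Y}(t) = Σ_{S ⊆ E∖Y} (−1)^{|(E∖Y)∖S|} t^{β(S)}` is the flow polynomial of the
spanning subgraph `G − Y` evaluated at `t = 1 − w`. -/
noncomputable def Multigraph.chain {R : Type*} [CommRing R] (G : Multigraph)
    (ℓ : G.E → R) (w : R) : R :=
  ∑ Y : Finset G.E,
    (∑ S ∈ Yᶜ.powerset, (-1 : R) ^ (Yᶜ.card - S.card) * (1 - w) ^ G.betti S) *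
      ∏ a ∈ Y, ℓ a

/-- The `s`-theta-graph `Θ_s`: two distinct vertices joined by `s` parallel edges. -/
def Multigraph.theta (s : ℕ) : Multigraph where
  V := Bool
  E := Fin s
  ends := fun _ => s(false, true)

/-!
Every nonempty edge set of `Θ_s` connects the two vertices, so its Betti number is one less
than its size, while the empty set has Betti number `0`. Multiplying the flow polynomial by `t`
therefore turns `t ^ β(S)` into `t ^ |S|`, up to a correction `t - 1` from `S = ∅`, and the
binomial theorem gives `t · F_{Θ_k}(t) = (t - 1)^k + (t - 1)(-1)^k`. At `t = 1 - w` these are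
the coefficients in the expansions of `∏ (a i - w)` and `∏ (a i - 1)` over subsets of edges.
-/

open Finset

theorem Fintype.prod_add_const {ι R : Type*} [Fintype ι] [DecidableEq ι] [CommSemiring R]
    (f : ι → R) (c : R) :
    ∏ i, (f i + c) = ∑ Y : Finset ι, c ^ #Yᶜ * ∏ i ∈ Y, f i := by
  rw [Fintype.prod_add]
  exact Finset.sum_congr rfl fun Y _ => by rw [Finset.prod_const, mul_comm]

namespace Multigraph

variable {R : Type*} [CommRing R]

/-- The flow polynomial `F_{G−Y}(t)` of the spanning subgraph with edge set `T = E ∖ Y`. -/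
noncomputable def flow (G : Multigraph) (T : Finset G.E) (t : R) : R :=
  ∑ S ∈ T.powerset, (-1) ^ (#T - #S) * t ^ G.betti S

theorem chain_eq_sum_flow (G : Multigraph) (ℓ : G.E → R) (w : R) :
    G.chain ℓ w = ∑ Y : Finset G.E, G.flow Yᶜ (1 - w) * ∏ a ∈ Y, ℓ a :=
  rfl

theorem mu_empty (G : Multigraph) : G.mu ∅ = Nat.card G.V :=
  Nat.card_congr
    { toFun := Quot.lift id fun _ _ h => by simp at h
      invFun := Quot.mk _
      left_inv := fun q => by induction q using Quot.ind; rfl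
      right_inv := fun _ => rfl }

theorem betti_empty (G : Multigraph) : G.betti ∅ = 0 := by
  simp [betti, mu_empty]

theorem theta_card_V (s : ℕ) : Nat.card (theta s).V = 2 :=
  (Nat.card_eq_fintype_card (α := Bool)).trans Fintype.card_bool

theorem theta_mu_of_nonempty {s : ℕ} {S : Finset (theta s).E} (hS : S.Nonempty) :
    (theta s).mu S = 1 := by
  obtain ⟨e, he⟩ := hS
  set r := fun x y : (theta s).V => ∃ e ∈ S, (theta s).ends e = s(x, y)
  have hft : Quot.mk r false = Quot.mk r true := Quot.sound ⟨e, he, rfl⟩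
  have : Subsingleton (Quot r) := ⟨fun p q => by
    induction p using Quot.ind with | _ x =>
    induction q using Quot.ind with | _ y =>
    cases x <;> cases y <;> simp [hft]⟩
  have : Nonempty (Quot r) := ⟨Quot.mk r false⟩
  exact Nat.card_unique

theorem theta_betti_of_nonempty {s : ℕ} {S : Finset (theta s).E} (hS : S.Nonempty) :
    (theta s).betti S = #S - 1 := by
  rw [betti, theta_mu_of_nonempty hS, theta_card_V]
  omega

theorem theta_mul_pow_betti {s : ℕ} (S : Finset (theta s).E) (t : R) :
    t * t ^ (theta s).betti S = t ^ #S + if S = ∅ then t - 1 else 0 := by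
  rcases S.eq_empty_or_nonempty with rfl | hS
  · simp [betti_empty]
  · rw [theta_betti_of_nonempty hS, if_neg hS.ne_empty, add_zero, ← pow_succ',
      Nat.sub_add_cancel hS.card_pos]

theorem theta_mul_flow {s : ℕ} (T : Finset (theta s).E) (t : R) :
    t * (theta s).flow T t = (t - 1) ^ #T + (t - 1) * (-1) ^ #T := by
  calc t * (theta s).flow T t
      = ∑ S ∈ T.powerset, (-1) ^ (#T - #S) * (t * t ^ (theta s).betti S) := by
        rw [flow, mul_sum]
        exact sum_congr rfl fun _ _ => mul_left_comm _ _ _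
    _ = ∑ S ∈ T.powerset, t ^ #S * (-1) ^ (#T - #S) + (t - 1) * (-1) ^ #T := by
        simp_rw [theta_mul_pow_betti, mul_add, sum_add_distrib, mul_ite, mul_zero,
          sum_ite_eq', mem_powerset, empty_subset, if_true, card_empty, Nat.sub_zero, mul_comm]
    _ = (t - 1) ^ #T + (t - 1) * (-1) ^ #T := by
        rw [sum_pow_mul_eq_add_pow, sub_eq_add_neg]

end Multigraph

theorem chain_theta_general {R : Type*} [CommRing R] (s : ℕ)
    (a : Fin s → R) (w : R) :
    (1 - w) * (Multigraph.theta s).chain a w =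
      (∏ i, (a i - w)) - w * ∏ i, (a i - 1) := by
  -- `Fin s` is `(theta s).E` only up to unfolding, which `rw` does not see through.
  let ℓ : (Multigraph.theta s).E → R := a
  show (1 - w) * (Multigraph.theta s).chain ℓ w = (∏ e, (ℓ e - w)) - w * ∏ e, (ℓ e - 1)
  calc (1 - w) * (Multigraph.theta s).chain ℓ w
      = ∑ Y : Finset (Multigraph.theta s).E, ((-w) ^ #Yᶜ + -w * (-1) ^ #Yᶜ) * ∏ e ∈ Y, ℓ e := by
        rw [Multigraph.chain_eq_sum_flow, mul_sum]
        refine sum_congr rfl fun Y _ => ?_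
        rw [← mul_assoc, Multigraph.theta_mul_flow, sub_sub_cancel_left]
    _ = (∏ e, (ℓ e + -w)) + -w * ∏ e, (ℓ e + -1) := by
        rw [Fintype.prod_add_const, Fintype.prod_add_const, mul_sum, ← sum_add_distrib]
        exact sum_congr rfl fun _ _ => by ring
    _ = (∏ e, (ℓ e - w)) - w * ∏ e, (ℓ e - 1) := by
        simp only [← sub_eq_add_neg, neg_mul]

/-- For the theta graph `Θ_s` (`s ≥ 1`) with edges labelled
`a 0, …, a (s−1)` in a commutative ring and any ring element `w`,
`(1 − w)·Ch(Θ_s) = Π_i (a i − w) − w·Π_i (a i − 1)`. -/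
theorem chain_theta {R : Type*} [CommRing R] (s : ℕ) (hs : 1 ≤ s)
    (a : Fin s → R) (w : R) :
    (1 - w) * (Multigraph.theta s).chain a w =
      (∏ i, (a i - w)) - w * ∏ i, (a i - 1) :=
  chain_theta_general s a w
end

section
/- Let R > 0 and let F₁, F₂, G be analytic functions on the disc {z ∈ ℂ : |z| < R} such that |G(0)| ≤ 1 and G is not constant. Then for each ε > 0 there exists s₀ < ∞ such that for all integers s ≥ s₀, the equation |1 + F₁(z)·G(z)^s| = |1 + F₂(z)·G(z)^s| has a solution z with |z| < ε. -/
/-!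
If `F₁ = F₂` somewhere near `0` there is nothing to prove. Otherwise, by the open mapping
theorem, `G` takes near `0` a value `b = G z₁` with `0 < |b| < 1`, and `c = F₁ z₁ - F₂ z₁ ≠ 0`.
Write `1 + F₁ G^s = (1 + F₂ G^s) + (F₁ - F₂) G^s`: near `z₁` the first summand is `1 + O(q^s)`
for some `q < 1`, and the second is close to `c G^s`, of size `t = |c| |b|^s`. Since `G` covers a
disc around `b` and `y ↦ y^s` wraps an arc of length `O(1/s)` of the circle `|y| = |b|` around a
whole circle, for large `s` there are points near `z₁` where `c G^s = t` and where `c G^s = -t`.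
There `|1 + F₁ G^s|` is larger, respectively smaller, than `|1 + F₂ G^s|`, and the intermediate
value theorem on a disc gives a point of equality.
-/

open Complex ComplexConjugate Filter Metric Set Topology

namespace Complex

lemma abs_norm_sq_one_add_add_sub_le (A D : ℂ) :
    |‖1 + A + D‖ ^ 2 - ‖1 + A‖ ^ 2 - 2 * D.re| ≤ (2 * ‖A‖ + ‖D‖) * ‖D‖ := by
  have hcross : |(A * conj D).re| ≤ ‖A‖ * ‖D‖ := by
    simpa using abs_re_le_norm (A * conj D)
  have hexpand : ‖1 + A + D‖ ^ 2 - ‖1 + A‖ ^ 2 - 2 * D.re = 2 * (A * conj D).re + ‖D‖ ^ 2 := by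
    simp only [← normSq_eq_norm_sq, normSq_add, add_mul, one_mul, add_re, conj_re]
    ring
  rw [hexpand, abs_le]
  constructor <;> nlinarith [abs_le.1 hcross, norm_nonneg A, norm_nonneg D]

lemma abs_norm_sq_one_add_add_sub_sub_lt {A D : ℂ} {t : ℝ} (ht : t ≠ 0)
    (hD : ‖D - t‖ ≤ |t| / 2) (hA : 3 * ‖A‖ + 9 / 4 * |t| < 1) :
    |‖1 + A + D‖ ^ 2 - ‖1 + A‖ ^ 2 - 2 * t| < 2 * |t| := by
  have hDt : ‖D‖ ≤ 3 / 2 * |t| := by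
    have := norm_le_norm_add_norm_sub' D (t : ℂ)
    rw [norm_real, Real.norm_eq_abs] at this
    linarith
  have hre : |D.re - t| ≤ |t| / 2 := by simpa using (abs_re_le_norm (D - t)).trans hD
  have herr : (2 * ‖A‖ + ‖D‖) * ‖D‖ < |t| := calc
    (2 * ‖A‖ + ‖D‖) * ‖D‖ ≤ (2 * ‖A‖ + 3 / 2 * |t|) * (3 / 2 * |t|) := by gcongr
    _ = |t| * (3 * ‖A‖ + 9 / 4 * |t|) := by ring
    _ < |t| := mul_lt_of_lt_one_right (abs_pos.2 ht) hA
  have := abs_norm_sq_one_add_add_sub_le A D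
  rw [abs_le] at this hre
  rw [abs_lt]
  constructor <;> linarith

lemma norm_one_add_lt_norm_one_add_add {A D : ℂ} {t : ℝ} (ht : 0 < t)
    (hD : ‖D - t‖ ≤ t / 2) (hA : 3 * ‖A‖ + 9 / 4 * t < 1) : ‖1 + A‖ < ‖1 + A + D‖ := by
  have := abs_lt.1 (abs_norm_sq_one_add_add_sub_sub_lt ht.ne' (by rwa [abs_of_pos ht])
    (by rwa [abs_of_pos ht]))
  rw [abs_of_pos ht] at this
  exact lt_of_pow_lt_pow_left₀ 2 (norm_nonneg _) (by linarith)

lemma norm_one_add_add_lt_norm_one_add {A D : ℂ} {t : ℝ} (ht : 0 < t)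
    (hD : ‖D + t‖ ≤ t / 2) (hA : 3 * ‖A‖ + 9 / 4 * t < 1) : ‖1 + A + D‖ < ‖1 + A‖ := by
  have := abs_lt.1 (abs_norm_sq_one_add_add_sub_sub_lt (t := -t) (neg_ne_zero.2 ht.ne')
    (by rwa [ofReal_neg, sub_neg_eq_add, abs_neg, abs_of_pos ht])
    (by rwa [abs_neg, abs_of_pos ht]))
  rw [abs_neg, abs_of_pos ht] at this
  exact lt_of_pow_lt_pow_left₀ 2 (norm_nonneg _) (by linarith)

lemma eventually_forall_exists_pow_eq_mem_ball {b : ℂ} (hb : b ≠ 0) {r : ℝ} (hr : 0 < r) :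
    ∀ᶠ s : ℕ in atTop, ∀ w : ℂ, ‖w‖ = ‖b‖ ^ s → ∃ y ∈ ball b r, y ^ s = w := by
  have hlim : Tendsto (fun s : ℕ => ‖b‖ * Real.pi / s) atTop (𝓝 0) :=
    tendsto_const_div_atTop_nhds_zero_nat _
  filter_upwards [hlim.eventually_lt_const hr, eventually_ne_atTop 0] with s hsr hs w hw
  set φ := arg (w / b ^ s)
  have hφ : exp (φ * I) = w / b ^ s := by
    have hunit : ‖w / b ^ s‖ = 1 := by
      rw [norm_div, norm_pow, hw, div_self (pow_ne_zero s (norm_ne_zero_iff.2 hb))]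
    simpa only [hunit, ofReal_one, one_mul] using norm_mul_exp_arg_mul_I (w / b ^ s)
  refine ⟨b * exp (I * (φ / s : ℝ)), ?_, ?_⟩
  · rw [mem_ball, dist_eq_norm, ← mul_sub_one, norm_mul]
    calc ‖b‖ * ‖exp (I * (φ / s : ℝ)) - 1‖ ≤ ‖b‖ * ‖φ / s‖ := by
          gcongr; exact Real.norm_exp_I_mul_ofReal_sub_one_le
      _ ≤ ‖b‖ * Real.pi / s := by
          rw [mul_div_assoc, norm_div, Real.norm_natCast, Real.norm_eq_abs]
          gcongr
          exact abs_arg_le_pi _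
      _ < r := hsr
  · calc (b * exp (I * (φ / s : ℝ))) ^ s = b ^ s * exp (φ * I) := by
          rw [mul_pow, ← exp_nat_mul]
          congr 2
          push_cast
          field_simp
      _ = w := by rw [hφ, mul_div_cancel₀ _ (pow_ne_zero s hb)]

end Complex

lemma exists_mem_norm_pos_lt_one {E : Type*} [NormedAddCommGroup E] [NormedSpace ℝ E]
    [Nontrivial E] {V : Set E} {a : E} (hV : V ∈ 𝓝 a) (ha : ‖a‖ ≤ 1) :
    ∃ y ∈ V, 0 < ‖y‖ ∧ ‖y‖ < 1 := by
  have hclosure : a ∈ closure (ball (0 : E) 1 ∩ {0}ᶜ) := by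
    refine closure_minimal ((dense_compl_singleton 0).open_subset_closure_inter isOpen_ball)
      isClosed_closure ?_
    rwa [closure_ball 0 one_ne_zero, mem_closedBall_zero_iff]
  obtain ⟨y, hyV, hy1, hy0⟩ := mem_closure_iff_nhds.1 hclosure V hV
  exact ⟨y, hyV, norm_pos_iff.2 hy0, mem_ball_zero_iff.1 hy1⟩

lemma AnalyticOnNhd.nhds_le_map_nhds {g : ℂ → ℂ} {U : Set ℂ} (hg : AnalyticOnNhd ℂ g U)
    (hU : IsPreconnected U) {z₀ : ℂ} (hz₀ : z₀ ∈ U) (hconst : ¬ ∀ z ∈ U, g z = g z₀)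
    {z : ℂ} (hz : z ∈ U) : 𝓝 (g z) ≤ map g (𝓝 z) := by
  refine (hg z hz).eventually_constant_or_nhds_le_map_nhds.resolve_left fun hloc => hconst ?_
  have := hg.eqOn_of_preconnected_of_eventuallyEq analyticOnNhd_const hU hz hloc
  intro w hw
  rw [this hw, this hz₀]

theorem IsPreconnected.exists_norm_one_add_mul_eq {S : Set ℂ} (hS : IsPreconnected S)
    {F₁ F₂ g : ℂ → ℂ} (hF₁ : ContinuousOn F₁ S) (hF₂ : ContinuousOn F₂ S)
    (hg : ContinuousOn g S) {c : ℂ} {t : ℝ} (ht : 0 < t)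
    (hF : ∀ z ∈ S, ‖F₁ z - F₂ z - c‖ ≤ ‖c‖ / 2)
    (hsmall : ∀ z ∈ S, 3 * ‖F₂ z * g z‖ + 9 / 4 * t < 1)
    (hpos : ∃ z ∈ S, g z * c = t) (hneg : ∃ z ∈ S, g z * c = -t) :
    ∃ z ∈ S, ‖1 + F₁ z * g z‖ = ‖1 + F₂ z * g z‖ := by
  obtain ⟨zpos, hzpos, hgpos⟩ := hpos
  obtain ⟨zneg, hzneg, hgneg⟩ := hneg
  have hsplit : ∀ z, 1 + F₁ z * g z = 1 + F₂ z * g z + (F₁ z - F₂ z) * g z := fun z => by ring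
  have hclose : ∀ z ∈ S, ‖(F₁ z - F₂ z) * g z - g z * c‖ ≤ ‖g z * c‖ / 2 := fun z hz => calc
    ‖(F₁ z - F₂ z) * g z - g z * c‖ = ‖F₁ z - F₂ z - c‖ * ‖g z‖ := by rw [← norm_mul]; ring_nf
    _ ≤ ‖c‖ / 2 * ‖g z‖ := by gcongr; exact hF z hz
    _ = ‖g z * c‖ / 2 := by rw [norm_mul]; ring
  have hcont : ∀ F : ℂ → ℂ, ContinuousOn F S → ContinuousOn (fun z => ‖1 + F z * g z‖) S :=
    fun F hF => (continuousOn_const.add (hF.mul hg)).norm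
  refine hS.intermediate_value₂ hzneg hzpos (hcont F₁ hF₁) (hcont F₂ hF₂) ?_ ?_
  · rw [hsplit]
    refine (Complex.norm_one_add_add_lt_norm_one_add ht ?_ (hsmall zneg hzneg)).le
    simpa [hgneg, abs_of_pos ht] using hclose zneg hzneg
  · rw [hsplit]
    refine (Complex.norm_one_add_lt_norm_one_add_add ht ?_ (hsmall zpos hzpos)).le
    simpa [hgpos, abs_of_pos ht] using hclose zpos hzpos

theorem eventually_exists_norm_one_add_mul_pow_eq {F₁ F₂ G : ℂ → ℂ} {z₁ : ℂ} {U : Set ℂ}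
    (hU : U ∈ 𝓝 z₁) (hF₁ : ContinuousOn F₁ U) (hF₂ : ContinuousOn F₂ U) (hG : ContinuousOn G U)
    (hGopen : 𝓝 (G z₁) ≤ map G (𝓝 z₁)) (hF : F₁ z₁ ≠ F₂ z₁) (hG₀ : G z₁ ≠ 0)
    (hG₁ : ‖G z₁‖ < 1) :
    ∀ᶠ s : ℕ in atTop, ∃ z ∈ U, ‖1 + F₁ z * G z ^ s‖ = ‖1 + F₂ z * G z ^ s‖ := by
  set b := G z₁
  set c := F₁ z₁ - F₂ z₁
  have hc : c ≠ 0 := sub_ne_zero.2 hF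
  obtain ⟨q, hbq, hq1⟩ := exists_between hG₁
  set M := ‖F₂ z₁‖ + 1
  have hnear : ∀ᶠ z in 𝓝 z₁, z ∈ U ∧ ‖G z‖ < q ∧ ‖F₁ z - F₂ z - c‖ < ‖c‖ / 2 ∧ ‖F₂ z‖ < M := by
    have hdiff : Tendsto (fun z => ‖F₁ z - F₂ z - c‖) (𝓝 z₁) (𝓝 0) := by
      simpa [c] using (((hF₁.continuousAt hU).sub (hF₂.continuousAt hU)).sub_const c).norm
    exact Filter.Eventually.and hU <| ((hG.continuousAt hU).norm.eventually_lt_const hbq).and <|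
      (hdiff.eventually_lt_const (by positivity)).and <|
        (hF₂.continuousAt hU).norm.eventually_lt_const (lt_add_one _)
  obtain ⟨ρ, hρ, hball⟩ := Metric.eventually_nhds_iff_ball.1 hnear
  have hballU : ball z₁ ρ ⊆ U := fun z hz => (hball z hz).1
  obtain ⟨r, hr, hsub⟩ := Metric.mem_nhds_iff.1 (hGopen (image_mem_map (ball_mem_nhds z₁ hρ)))
  have hlim : Tendsto (fun s : ℕ => 3 * (M * q ^ s) + 9 / 4 * (‖c‖ * ‖b‖ ^ s)) atTop (𝓝 0) := by
    have hqs := tendsto_pow_atTop_nhds_zero_of_lt_one (hbq.le.trans' (norm_nonneg b)) hq1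
    have hbs := tendsto_pow_atTop_nhds_zero_of_lt_one (norm_nonneg b) hG₁
    simpa using ((hqs.const_mul M).const_mul 3).add ((hbs.const_mul ‖c‖).const_mul (9 / 4))
  filter_upwards [hlim.eventually_lt_const one_pos,
    Complex.eventually_forall_exists_pow_eq_mem_ball hG₀ hr] with s hs hroots
  have hroot : ∀ σ : ℂ, ‖σ‖ = ‖c‖ * ‖b‖ ^ s → ∃ z ∈ ball z₁ ρ, G z ^ s * c = σ := by
    intro σ hσ
    obtain ⟨y, hy, hys⟩ := hroots (σ / c) (by
      rw [norm_div, hσ, mul_div_cancel_left₀ _ (norm_ne_zero_iff.2 hc)])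
    obtain ⟨z, hz, rfl⟩ := hsub hy
    exact ⟨z, hz, by rw [hys, div_mul_cancel₀ _ hc]⟩
  have hsmall : ∀ z ∈ ball z₁ ρ, 3 * ‖F₂ z * G z ^ s‖ + 9 / 4 * (‖c‖ * ‖b‖ ^ s) < 1 := by
    intro z hz
    obtain ⟨-, hGz, -, hF₂z⟩ := hball z hz
    refine lt_of_le_of_lt ?_ hs
    rw [norm_mul, norm_pow]
    gcongr
  obtain ⟨z, hz, heq⟩ := (convex_ball z₁ ρ).isPreconnected.exists_norm_one_add_mul_eq
    (hF₁.mono hballU) (hF₂.mono hballU) ((hG.mono hballU).pow s) (by positivity)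
    (fun z hz => (hball z hz).2.2.1.le) hsmall (hroot _ (by simp)) (hroot _ (by simp))
  exact ⟨z, hballU hz, heq⟩

/-- Sokal's lemma: Let `F₁`, `F₂`, `G` be analytic functions on the
disc `{z : |z| < R}` with `|G(0)| ≤ 1` and `G` not constant on the disc.  Then for
each `ε > 0` there exists `s₀` such that for all integers `s ≥ s₀` the equation
`|1 + F₁(z)·G(z)^s| = |1 + F₂(z)·G(z)^s|` has a solution with `|z| < ε`. -/
theorem sokal_lemma (R : ℝ) (hR : 0 < R) (F₁ F₂ G : ℂ → ℂ)
    (hF₁ : AnalyticOnNhd ℂ F₁ (Metric.ball 0 R))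
    (hF₂ : AnalyticOnNhd ℂ F₂ (Metric.ball 0 R))
    (hG : AnalyticOnNhd ℂ G (Metric.ball 0 R))
    (hG0 : ‖G 0‖ ≤ 1)
    (hGnotconst : ¬ ∀ z ∈ Metric.ball (0 : ℂ) R, G z = G 0)
    (ε : ℝ) (hε : 0 < ε) :
    ∃ s₀ : ℕ, ∀ s : ℕ, s₀ ≤ s →
      ∃ z : ℂ, ‖z‖ < ε ∧
        ‖1 + F₁ z * G z ^ s‖ = ‖1 + F₂ z * G z ^ s‖ := by
  set U := ball (0 : ℂ) (min ε R)
  have hUR : U ⊆ ball 0 R := ball_subset_ball (min_le_right ε R)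
  have hUε : ∀ z ∈ U, ‖z‖ < ε := fun z hz => (mem_ball_zero_iff.1 hz).trans_le (min_le_left ε R)
  by_cases hcoincide : ∃ z ∈ U, F₁ z = F₂ z
  · obtain ⟨z, hz, hFz⟩ := hcoincide
    exact ⟨0, fun s _ => ⟨z, hUε z hz, by rw [hFz]⟩⟩
  push Not at hcoincide
  have hopen : ∀ z ∈ ball (0 : ℂ) R, 𝓝 (G z) ≤ map G (𝓝 z) := fun z hz =>
    hG.nhds_le_map_nhds (convex_ball 0 R).isPreconnected (mem_ball_self hR) hGnotconst hz
  have hU0 : U ∈ 𝓝 0 := ball_mem_nhds 0 (lt_min hε hR)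
  obtain ⟨_, ⟨z₁, hz₁, rfl⟩, hG₀, hG₁⟩ :=
    exists_mem_norm_pos_lt_one (hopen 0 (mem_ball_self hR) (image_mem_map hU0)) hG0
  obtain ⟨s₀, hs₀⟩ := eventually_atTop.1 <| eventually_exists_norm_one_add_mul_pow_eq
    (isOpen_ball.mem_nhds hz₁) (hF₁.continuousOn.mono hUR) (hF₂.continuousOn.mono hUR)
    (hG.continuousOn.mono hUR) (hopen z₁ (hUR hz₁)) (hcoincide z₁ hz₁) (norm_pos_iff.1 hG₀) hG₁
  refine ⟨s₀, fun s hs => ?_⟩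
  obtain ⟨z, hz, heq⟩ := hs₀ s hs
  exact ⟨z, hUε z hz, heq⟩
end

section
/- For every complex number A₀ ≠ 0 with |A₀ + 1 + A₀^{−1}| ≥ 1 and every ε > 0, there exists s₀ < ∞ such that for every integer s ≥ s₀ there exists a complex number A ≠ 0 with |A − A₀| < ε, σ ≠ 0 (where σ = A + 1 + A^{−1}), satisfying |1 + σ·(−σ)^{−s}| = |1 − (−σ)^{−s}|. -/
/-!
Put `w = -σ`. Multiplying by `w ^ s`, the required identity becomes `‖w ^ s - w‖ = ‖w ^ s - 1‖`:
`w ^ s` lies on the perpendicular bisector of `1` and `w`. Move `w = w₀ e^{it}` along the circle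
`‖w‖ = ‖w₀‖ ≥ 1`, where `w₀ = -σ₀ ≠ 1`. There `‖w^s - w‖² - ‖w^s - 1‖²` equals
`‖w₀‖² - 1 + 2 Re (w^s (1 - w̄))`; on a `t`-interval of length `O(1/s)` the main part
`w₀^s e^{ist} (1 - w̄₀)` makes a half-turn, while its size `‖w₀‖^s ‖1 - w₀‖` dominates both
`‖w₀‖² - 1` and the `O(‖w₀‖^s / s)` drift of `w`, so the intermediate value theorem gives a
solution `w` with `‖w - w₀‖ = O(1/s)`. Finally `A` is the root of `A² + (1 - σ) A + 1` nearer
to `A₀`; as the product of the distances from `A₀` to both roots is `‖A₀‖ ‖σ - σ₀‖`, it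
converges to `A₀`. The case `A₀ = -1` (`w₀ = 1`) is solved by `A = -1` for every `s`.
-/

open Complex Filter
open scoped Real ComplexConjugate

theorem exists_add_one_add_inv_eq_and_norm_sub_sq_le {A₀ : ℂ} (hA₀ : A₀ ≠ 0) (σ : ℂ) :
    ∃ A : ℂ, A ≠ 0 ∧ A + 1 + A⁻¹ = σ ∧
      ‖A - A₀‖ ^ 2 ≤ ‖A₀‖ * ‖σ - (A₀ + 1 + A₀⁻¹)‖ := by
  obtain ⟨d, hd⟩ := IsAlgClosed.exists_pow_nat_eq ((σ - 1) ^ 2 - 4) two_pos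
  wlog hle : ‖(σ - 1 + d) / 2 - A₀‖ ≤ ‖(σ - 1 - d) / 2 - A₀‖ generalizing d
  · refine this (-d) (by rw [neg_sq, hd]) ?_
    simpa only [sub_neg_eq_add, ← sub_eq_add_neg] using (not_le.1 hle).le
  have hprod : (σ - 1 + d) / 2 * ((σ - 1 - d) / 2) = 1 := by linear_combination -hd / 4
  refine ⟨_, left_ne_zero_of_mul_eq_one hprod, ?_, ?_⟩
  · rw [inv_eq_of_mul_eq_one_right hprod]
    ring
  calc ‖(σ - 1 + d) / 2 - A₀‖ ^ 2
      ≤ ‖(σ - 1 + d) / 2 - A₀‖ * ‖(σ - 1 - d) / 2 - A₀‖ := by rw [sq]; gcongr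
    _ = ‖A₀‖ * ‖σ - (A₀ + 1 + A₀⁻¹)‖ := by
      rw [norm_sub_rev σ, ← norm_mul, ← norm_mul]
      congr 1
      field_simp
      linear_combination -hd

theorem add_one_add_inv_ne_neg_one {A : ℂ} (hA : A ≠ -1) : A + 1 + A⁻¹ ≠ -1 := by
  rcases eq_or_ne A 0 with rfl | hA₀
  · norm_num
  intro h
  refine hA (eq_neg_of_add_eq_zero_left (pow_eq_zero_iff two_ne_zero |>.1 ?_))
  field_simp at h
  linear_combination h

theorem norm_one_add_neg_mul_zpow_neg_eq_iff {w : ℂ} (hw : w ≠ 0) (n : ℕ) :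
    ‖1 + -w * w ^ (-(n : ℤ))‖ = ‖1 - w ^ (-(n : ℤ))‖ ↔ ‖w ^ n - w‖ = ‖w ^ n - 1‖ := by
  have hwn : w ^ n ≠ 0 := pow_ne_zero n hw
  rw [zpow_neg, zpow_natCast,
    show 1 + -w * (w ^ n)⁻¹ = (w ^ n - w) * (w ^ n)⁻¹ by field_simp; ring,
    show 1 - (w ^ n)⁻¹ = (w ^ n - 1) * (w ^ n)⁻¹ by field_simp,
    norm_mul, norm_mul, mul_left_inj' (norm_ne_zero_iff.2 (inv_ne_zero hwn))]

theorem norm_sub_sq_sub_norm_sub_one_sq (z w : ℂ) :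
    ‖z - w‖ ^ 2 - ‖z - 1‖ ^ 2 = ‖w‖ ^ 2 - 1 + 2 * (z * (1 - conj w)).re := by
  simp only [← normSq_eq_norm_sq, normSq_sub, map_one, mul_one, mul_sub, sub_re]
  ring

theorem abs_norm_sub_sq_sub_norm_sub_one_sq_sub_le (z w w₀ : ℂ) :
    |‖z - w‖ ^ 2 - ‖z - 1‖ ^ 2 - (‖w‖ ^ 2 - 1 + 2 * (z * (1 - conj w₀)).re)| ≤
      2 * ‖z‖ * ‖w - w₀‖ := by
  have h : (z * (1 - conj w)).re - (z * (1 - conj w₀)).re = (z * conj (w₀ - w)).re := by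
    simp only [map_sub, mul_sub, sub_re]
    ring
  rw [norm_sub_sq_sub_norm_sub_one_sq, add_sub_add_left_eq_sub, ← mul_sub, h, abs_mul,
    abs_two, mul_assoc, norm_sub_rev w]
  gcongr
  exact (abs_re_le_norm _).trans_eq (by rw [norm_mul, norm_conj])

theorem exists_abs_le_exp_mul_I_mul_eq (v : ℂ) {s : ℕ} (hs : s ≠ 0) {φ : ℝ} (hφ : |φ| ≤ π) :
    ∃ t : ℝ, |t| ≤ 2 * π / s ∧ exp ((s * t : ℝ) * I) * v = ‖v‖ * exp (φ * I) := by
  have hs' : (0 : ℝ) < s := by positivity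
  refine ⟨(φ - arg v) / s, ?_, ?_⟩
  · rw [abs_div, Nat.abs_cast]
    gcongr
    have := abs_arg_le_pi v
    linarith [abs_sub φ (arg v)]
  · rw [mul_div_cancel₀ _ hs'.ne']
    calc exp ((φ - arg v : ℝ) * I) * v
        = exp ((φ - arg v : ℝ) * I) * (‖v‖ * exp (arg v * I)) := by rw [norm_mul_exp_arg_mul_I]
      _ = ‖v‖ * exp (φ * I) := by
          rw [mul_left_comm, ← exp_add]
          push_cast
          ring_nf

theorem exists_norm_pow_sub_self_eq_norm_pow_sub_one {w₀ : ℂ} {s : ℕ} (hs : s ≠ 0)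
    (h : |‖w₀‖ ^ 2 - 1| < 2 * ‖w₀‖ ^ s * (‖1 - w₀‖ - 2 * π * ‖w₀‖ / s)) :
    ∃ w : ℂ, ‖w - w₀‖ ≤ 2 * π * ‖w₀‖ / s ∧ ‖w ^ s - w‖ = ‖w ^ s - 1‖ := by
  set r := ‖w₀‖
  set v := w₀ ^ s * (1 - conj w₀)
  have hv : ‖v‖ = r ^ s * ‖1 - w₀‖ := by
    rw [norm_mul, norm_pow, ← norm_conj (1 - w₀), map_sub, map_one]
  let w : ℝ → ℂ := fun t => w₀ * exp (t * I)
  let g : ℝ → ℝ := fun t => ‖w t ^ s - w t‖ ^ 2 - ‖w t ^ s - 1‖ ^ 2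
  have hw_norm (t : ℝ) : ‖w t‖ = r := by simp [w, norm_exp_ofReal_mul_I, r]
  have hw_dist (t : ℝ) : ‖w t - w₀‖ ≤ r * |t| := by
    rw [show w t - w₀ = w₀ * (exp (I * t) - 1) by simp only [w]; ring_nf, norm_mul]
    gcongr
    exact Real.norm_exp_I_mul_ofReal_sub_one_le
  have hg_approx (t : ℝ) :
      |g t - (r ^ 2 - 1 + 2 * (exp ((s * t : ℝ) * I) * v).re)| ≤ 2 * r ^ s * (r * |t|) := by
    have hpow : w t ^ s * (1 - conj w₀) = exp ((s * t : ℝ) * I) * v := by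
      simp only [w, v, mul_pow, ← exp_nat_mul]
      push_cast
      ring_nf
    have := abs_norm_sub_sq_sub_norm_sub_one_sq_sub_le (w t ^ s) (w t) w₀
    rw [hpow, hw_norm, norm_pow, hw_norm] at this
    exact this.trans (by gcongr; exact hw_dist t)
  have hη (t : ℝ) (ht : |t| ≤ 2 * π / s) : r * |t| ≤ 2 * π * r / s := by
    calc r * |t| ≤ r * (2 * π / s) := by gcongr
      _ = 2 * π * r / s := by ring
  obtain ⟨ta, hta, hva⟩ := exists_abs_le_exp_mul_I_mul_eq v hs (φ := 0) (by simp [Real.pi_pos.le])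
  obtain ⟨tb, htb, hvb⟩ :=
    exists_abs_le_exp_mul_I_mul_eq v hs (φ := π) (by rw [abs_of_pos Real.pi_pos])
  have hga : 0 ≤ g ta := by
    have h1 := abs_le.1 (hg_approx ta)
    have h2 : 2 * r ^ s * (r * |ta|) ≤ 2 * r ^ s * (2 * π * r / s) := by gcongr; exact hη ta hta
    rw [hva, ofReal_zero, zero_mul, exp_zero, mul_one, ofReal_re, hv] at h1
    nlinarith [neg_abs_le (r ^ 2 - 1)]
  have hgb : g tb ≤ 0 := by
    have h1 := abs_le.1 (hg_approx tb)
    have h2 : 2 * r ^ s * (r * |tb|) ≤ 2 * r ^ s * (2 * π * r / s) := by gcongr; exact hη tb htb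
    rw [hvb, exp_pi_mul_I, mul_neg_one, neg_re, ofReal_re, hv] at h1
    nlinarith [le_abs_self (r ^ 2 - 1)]
  have hg : Continuous g := by fun_prop
  obtain ⟨t, ht, hgt⟩ :=
    intermediate_value_uIcc hg.continuousOn (Set.mem_uIcc.2 (Or.inr ⟨hgb, hga⟩))
  have ht' : |t| ≤ 2 * π / s :=
    abs_le.2 (Set.uIcc_subset_Icc (abs_le.1 hta) (abs_le.1 htb) ht)
  refine ⟨w t, (hw_dist t).trans (hη t ht'), ?_⟩
  exact (sq_eq_sq₀ (norm_nonneg _) (norm_nonneg _)).1 (sub_eq_zero.1 hgt)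

theorem eventually_exists_norm_pow_sub_self_eq_norm_pow_sub_one {w₀ : ℂ} (hw₀ : 1 ≤ ‖w₀‖)
    (hw₀1 : w₀ ≠ 1) {δ : ℝ} (hδ : 0 < δ) :
    ∀ᶠ s : ℕ in atTop, ∃ w : ℂ, ‖w - w₀‖ < δ ∧ ‖w ^ s - w‖ = ‖w ^ s - 1‖ := by
  set r := ‖w₀‖
  set c := ‖1 - w₀‖
  have hc : 0 < c := norm_pos_iff.2 (sub_ne_zero.2 hw₀1.symm)
  have hsmall : ∀ᶠ s : ℕ in atTop, 2 * π * r / s < min δ (c / 2) :=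
    (tendsto_const_div_atTop_nhds_zero_nat _).eventually (gt_mem_nhds (by positivity))
  have hlarge : ∀ᶠ s : ℕ in atTop, (r + 1) / c ≤ s :=
    tendsto_natCast_atTop_atTop.eventually_ge_atTop _
  filter_upwards [hsmall, hlarge, eventually_ne_atTop 0] with s hsmall hlarge hs
  obtain ⟨hsδ, hsc⟩ := lt_min_iff.1 hsmall
  refine (exists_norm_pow_sub_self_eq_norm_pow_sub_one hs ?_).imp
    fun w hw => ⟨hw.1.trans_lt hsδ, hw.2⟩
  -- Bernoulli's inequality `r ^ s ≥ 1 + s (r - 1)` makes `r ^ s * c` outgrow `r ^ 2 - 1`.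
  have hbern : 1 + s * (r - 1) ≤ r ^ s := by
    simpa using one_add_mul_le_pow (a := r - 1) (by linarith) s
  rw [div_le_iff₀ hc] at hlarge
  rw [abs_of_nonneg (by nlinarith)]
  nlinarith [mul_le_mul_of_nonneg_right hbern hc.le, pow_pos (zero_lt_one.trans_le hw₀) s]

/-- For every `A₀ ≠ 0` with `|A₀ + 1 + A₀⁻¹| ≥ 1` and every `ε > 0`
there exists `s₀` such that for every integer `s ≥ s₀` there is `A ≠ 0` with
`|A − A₀| < ε`, `σ = A + 1 + A⁻¹ ≠ 0`, and `|1 + σ·(−σ)⁻ˢ| = |1 − (−σ)⁻ˢ|`. -/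
theorem limit_zeros_ring_of_beads (A₀ : ℂ) (hA₀ : A₀ ≠ 0)
    (hreg : 1 ≤ ‖A₀ + 1 + A₀⁻¹‖) (ε : ℝ) (hε : 0 < ε) :
    ∃ s₀ : ℕ, ∀ s : ℕ, s₀ ≤ s →
      ∃ A : ℂ, A ≠ 0 ∧ ‖A - A₀‖ < ε ∧ A + 1 + A⁻¹ ≠ 0 ∧
        ‖1 + (A + 1 + A⁻¹) * (-(A + 1 + A⁻¹)) ^ (-(s : ℤ))‖ =
          ‖1 - (-(A + 1 + A⁻¹)) ^ (-(s : ℤ))‖ := by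
  by_cases hA₀1 : A₀ = -1
  · exact ⟨0, fun s _ => ⟨-1, by norm_num, by simpa [hA₀1], by norm_num, by norm_num⟩⟩
  set σ₀ := A₀ + 1 + A₀⁻¹
  have hw₀1 : -σ₀ ≠ 1 := fun h => add_one_add_inv_ne_neg_one hA₀1 (neg_eq_iff_eq_neg.1 h)
  have hdist := eventually_exists_norm_pow_sub_self_eq_norm_pow_sub_one (by rwa [norm_neg]) hw₀1
    (δ := ε ^ 2 / ‖A₀‖) (by positivity)
  obtain ⟨s₀, hs₀⟩ := eventually_atTop.1 (hdist.and (eventually_ne_atTop 0))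
  refine ⟨s₀, fun s hs => ?_⟩
  obtain ⟨⟨w, hwδ, hw⟩, hs0⟩ := hs₀ s hs
  have hw0 : w ≠ 0 := by
    rintro rfl
    simp [zero_pow hs0] at hw
  obtain ⟨A, hA0, hAσ, hAA₀⟩ := exists_add_one_add_inv_eq_and_norm_sub_sq_le hA₀ (-w)
  refine ⟨A, hA0, ?_, by rwa [hAσ, neg_ne_zero], ?_⟩
  · have hσ : ‖-w - σ₀‖ = ‖w - -σ₀‖ := by
      rw [← norm_neg]
      congr 1
      ring
    refine (pow_lt_pow_iff_left₀ (norm_nonneg _) hε.le two_ne_zero).1 (hAA₀.trans_lt ?_)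
    rwa [hσ, ← lt_div_iff₀' (norm_pos_iff.2 hA₀)]
  · rw [hAσ, neg_neg]
    exact (norm_one_add_neg_mul_zpow_neg_eq_iff hw0 s).2 hw
end

section
/- For every complex number A₀ ≠ 0 with σ₀ = A₀ + 1 + A₀^{−1} ≠ 0 and |(A₀ + 2 + A₀^{−1})·A₀^{−2} + 1| ≤ |A₀ + 1 + A₀^{−1}|, and for every ε > 0, there exists s₀ < ∞ such that for every integer s ≥ s₀ there exists a complex number A ≠ 0 with |A − A₀| < ε and σ = A + 1 + A^{−1} ≠ 0, satisfying |1 + σ·(((σ+1)A^{−2} + 1)/(−σ))^s| = |1 − (((σ+1)A^{−2} + 1)/(−σ))^s|. -/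
/-!
Write `w(A) = ((σ + 1)A⁻² + 1) / (-σ)`, so that the equation reads `‖1 + σ z‖ = ‖1 - z‖` with
`z = w(A)ˢ`, and `‖1 + σ z‖² - ‖1 - z‖² = 2 Re((σ + 1) z) + (|σ|² - 1)|z|²`. For small `z` this
gap has the sign of `Re((σ₀ + 1) z)`. Since `w` is analytic and not locally constant, it is an open
map at `A₀`, and because `|w(A₀)| ≤ 1` the image of a small ball around `A₀` contains a disc around
some `w₁ ≠ 0` with `|w₁| < 1`. For large `s` the `s`-th powers of that disc are tiny and wind all
the way around the origin, so the gap takes both signs on the ball and vanishes somewhere by the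
intermediate value theorem. The degenerate case `σ₀ = -1` is solved by `A = A₀` itself.
-/

open Complex Filter Metric Topology

noncomputable def normSqGap (σ z : ℂ) : ℝ :=
  normSq (1 + σ * z) - normSq (1 - z)

theorem normSqGap_eq_zero_iff {σ z : ℂ} : normSqGap σ z = 0 ↔ ‖1 + σ * z‖ = ‖1 - z‖ := by
  rw [normSqGap, sub_eq_zero, norm_def, norm_def, Real.sqrt_inj (normSq_nonneg _) (normSq_nonneg _)]

theorem normSqGap_eq (σ z : ℂ) :
    normSqGap σ z = 2 * ((σ + 1) * z).re + (normSq σ - 1) * normSq z := by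
  rw [normSqGap, sub_eq_add_neg (1 : ℂ), normSq_add, normSq_add]
  simp only [normSq_neg, normSq_one, normSq_mul, mul_re, add_re, add_im, neg_re, neg_im, one_re,
    one_im, conj_re, conj_im, map_neg]
  ring

theorem mul_normSqGap_nonneg {σ β z : ℂ} {ρ : ℝ} (hz : β * z = ρ)
    (hre : 1 / 2 ≤ ((σ + 1) / β).re) (hsmall : |normSq σ - 1| * |ρ| ≤ ‖β‖ ^ 2) :
    0 ≤ ρ * normSqGap σ z := by
  have hβ : β ≠ 0 := by rintro rfl; norm_num at hre
  have hmain : ((σ + 1) * z).re = ((σ + 1) / β).re * ρ := by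
    rw [show (σ + 1) * z = (σ + 1) / β * (β * z) by field_simp, hz, re_mul_ofReal]
  have hρ : |ρ| = ‖β‖ * ‖z‖ := by rw [← norm_mul, hz, norm_real, Real.norm_eq_abs]
  set E := (normSq σ - 1) * normSq z
  have hE : |E| ≤ |ρ| := by
    refine le_of_mul_le_mul_left ?_ (pow_pos (norm_pos_iff.mpr hβ) 2)
    calc ‖β‖ ^ 2 * |E| = |normSq σ - 1| * |ρ| * |ρ| := by
          rw [abs_mul, normSq_eq_norm_sq z, abs_of_nonneg (sq_nonneg ‖z‖), hρ]; ring
      _ ≤ ‖β‖ ^ 2 * |ρ| := mul_le_mul_of_nonneg_right hsmall (abs_nonneg ρ)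
  rw [normSqGap_eq, hmain]
  have hlead : ρ ^ 2 ≤ 2 * ((σ + 1) / β).re * ρ ^ 2 := by nlinarith [sq_nonneg ρ]
  have herr : -(|ρ| * |E|) ≤ ρ * E := by rw [← abs_mul]; exact neg_abs_le _
  have hρE : |ρ| * |E| ≤ ρ ^ 2 := by
    rw [← sq_abs]; nlinarith [abs_nonneg ρ]
  nlinarith

theorem Complex.pow_mul_exp_I_mul_div {s : ℕ} (hs : s ≠ 0) (w : ℂ) (θ : ℝ) :
    (w * exp (I * ↑(θ / s))) ^ s = w ^ s * exp (I * θ) := by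
  rw [mul_pow, ← exp_nat_mul]
  congr 2
  push_cast
  field_simp

theorem Complex.norm_mul_exp_I_mul_sub_self_le (w : ℂ) (t : ℝ) :
    ‖w * exp (I * t) - w‖ ≤ ‖w‖ * |t| := by
  rw [← mul_sub_one, norm_mul, ← Real.norm_eq_abs]
  gcongr
  exact Real.norm_exp_I_mul_ofReal_sub_one_le

theorem Complex.mul_exp_I_mul_sub_arg (m : ℂ) (θ : ℝ) :
    m * exp (I * ↑(θ - arg m)) = ‖m‖ * exp (I * θ) := by
  nth_rw 1 [← norm_mul_exp_arg_mul_I m]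
  rw [mul_assoc, ← exp_add]
  push_cast
  ring_nf

theorem Complex.exists_ball_subset_of_mem_nhds_of_norm_le_one {S : Set ℂ} {w₀ : ℂ}
    (hS : S ∈ 𝓝 w₀) (hw₀ : ‖w₀‖ ≤ 1) :
    ∃ w₁ ≠ 0, ‖w₁‖ < 1 ∧ ∃ δ > 0, ball w₁ δ ⊆ S := by
  have hw₀_mem : w₀ ∈ closure (ball (0 : ℂ) 1) := by
    rw [closure_ball 0 one_ne_zero]; simpa using hw₀
  obtain ⟨w₁, ⟨hw₁S, hw₁1⟩, hw₁0⟩ := (dense_compl_singleton (0 : ℂ)).inter_open_nonempty _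
    (isOpen_interior.inter isOpen_ball)
    (mem_closure_iff_nhds.mp hw₀_mem _ (interior_mem_nhds.mpr hS))
  obtain ⟨δ, hδ, hsub⟩ := Metric.isOpen_iff.mp isOpen_interior w₁ hw₁S
  exact ⟨w₁, hw₁0, by simpa using hw₁1, δ, hδ, hsub.trans interior_subset⟩

theorem exists_mem_pow_eq_mul_exp {f : ℂ → ℂ} {S : Set ℂ} {w₁ : ℂ} {δ : ℝ}
    (hsub : ball w₁ δ ⊆ f '' S) (hw₁ : ‖w₁‖ ≤ 1) {s : ℕ} (hs : s ≠ 0)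
    (hδ : 2 * Real.pi / s < δ) {θ : ℝ} (hθ : |θ| ≤ 2 * Real.pi) :
    ∃ A ∈ S, f A ^ s = w₁ ^ s * exp (I * θ) := by
  have hmem : w₁ * exp (I * ↑(θ / s)) ∈ ball w₁ δ := by
    rw [mem_ball, dist_eq_norm]
    calc ‖w₁ * exp (I * ↑(θ / s)) - w₁‖ ≤ ‖w₁‖ * |θ / s| := norm_mul_exp_I_mul_sub_self_le _ _
      _ ≤ 1 * (2 * Real.pi / s) := by
          rw [abs_div, Nat.abs_cast]
          gcongr
      _ < δ := by rwa [one_mul]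
  obtain ⟨A, hA, hfA⟩ := hsub hmem
  exact ⟨A, hA, by rw [hfA, pow_mul_exp_I_mul_div hs]⟩

theorem exists_normSqGap_nonneg_and_nonpos {f g : ℂ → ℂ} {S : Set ℂ} {β w₁ : ℂ} {C δ : ℝ}
    {s : ℕ} (hre : ∀ A ∈ S, 1 / 2 ≤ ((g A + 1) / β).re) (hC : ∀ A ∈ S, |normSq (g A) - 1| ≤ C)
    (hsub : ball w₁ δ ⊆ f '' S) (hβ : β ≠ 0) (hw₁0 : w₁ ≠ 0) (hw₁1 : ‖w₁‖ ≤ 1) (hs : s ≠ 0)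
    (hsδ : 2 * Real.pi / s < δ) (hsmall : C * ‖w₁‖ ^ s ≤ ‖β‖) :
    ∃ A₁ ∈ S, ∃ A₂ ∈ S, 0 ≤ normSqGap (g A₁) (f A₁ ^ s) ∧ normSqGap (g A₂) (f A₂ ^ s) ≤ 0 := by
  set m := β * w₁ ^ s
  have hm : 0 < ‖m‖ := norm_pos_iff.mpr (mul_ne_zero hβ (pow_ne_zero s hw₁0))
  have hroot : ∀ θ : ℝ, |θ| ≤ Real.pi → ∃ A ∈ S, β * f A ^ s = ‖m‖ * exp (I * θ) := by
    intro θ hθ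
    obtain ⟨A, hA, hfA⟩ := exists_mem_pow_eq_mul_exp hsub hw₁1 hs hsδ
      (θ := θ - arg m) (by linarith [abs_sub θ (arg m), abs_arg_le_pi m])
    exact ⟨A, hA, by rw [hfA, ← mul_assoc, mul_exp_I_mul_sub_arg]⟩
  have hsign : ∀ A ∈ S, ∀ ρ : ℝ, |ρ| = ‖m‖ → β * f A ^ s = ρ →
      0 ≤ ρ * normSqGap (g A) (f A ^ s) := by
    intro A hA ρ hρ hz
    refine mul_normSqGap_nonneg hz (hre A hA) ?_
    calc |normSq (g A) - 1| * |ρ| ≤ C * ‖w₁‖ ^ s * ‖β‖ := by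
          rw [hρ, norm_mul, norm_pow, mul_comm ‖β‖, ← mul_assoc]
          gcongr
          exact hC A hA
      _ ≤ ‖β‖ ^ 2 := by rw [sq]; gcongr
  obtain ⟨A₁, hA₁, h₁⟩ := hroot 0 (by simp [Real.pi_pos.le])
  obtain ⟨A₂, hA₂, h₂⟩ := hroot Real.pi (by simp [abs_of_pos Real.pi_pos])
  rw [ofReal_zero, mul_zero, exp_zero, mul_one] at h₁
  rw [mul_comm I, exp_pi_mul_I, mul_neg_one, ← ofReal_neg] at h₂
  refine ⟨A₁, hA₁, A₂, hA₂, nonneg_of_mul_nonneg_right (hsign A₁ hA₁ _ (abs_norm m) h₁) hm, ?_⟩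
  have := hsign A₂ hA₂ _ (by rw [abs_neg, abs_norm]) h₂
  nlinarith

theorem eventually_exists_norm_one_add_mul_pow_eq_norm_one_sub_pow {f g : ℂ → ℂ} {A₀ : ℂ}
    (hf : AnalyticAt ℂ f A₀) (hf_const : ¬∀ᶠ A in 𝓝 A₀, f A = f A₀)
    (hg : ∀ᶠ A in 𝓝 A₀, ContinuousAt g A) (hβ : g A₀ + 1 ≠ 0) (hf₀ : ‖f A₀‖ ≤ 1)
    {P : ℂ → Prop} (hP : ∀ᶠ A in 𝓝 A₀, P A) :
    ∀ᶠ s : ℕ in atTop, ∃ A, P A ∧ ‖1 + g A * f A ^ s‖ = ‖1 - f A ^ s‖ := by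
  set β := g A₀ + 1
  set C := |normSq (g A₀) - 1| + 1
  have hgA₀ : ContinuousAt g A₀ := hg.self_of_nhds
  have hre : ∀ᶠ A in 𝓝 A₀, 1 / 2 < ((g A + 1) / β).re := by
    have h : Tendsto (fun A => ((g A + 1) / β).re) (𝓝 A₀) (𝓝 ((β / β).re)) :=
      (continuous_re.tendsto _).comp ((hgA₀.add continuousAt_const).div_const β)
    rw [div_self hβ, one_re] at h
    exact h.eventually_const_lt (by norm_num)
  have hC : ∀ᶠ A in 𝓝 A₀, |normSq (g A) - 1| < C :=
    ContinuousAt.eventually_lt (by fun_prop) continuousAt_const (lt_add_one _)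
  obtain ⟨r, hr, hball⟩ := eventually_nhds_iff_ball.mp <|
    hP.and <| (hf.eventually_analyticAt.mono fun A h => h.continuousAt).and <| hg.and <| hre.and hC
  obtain ⟨w₁, hw₁0, hw₁1, δ, hδ, hsub⟩ := exists_ball_subset_of_mem_nhds_of_norm_le_one
    (hf.eventually_constant_or_nhds_le_map_nhds.resolve_left hf_const
      (image_mem_map (ball_mem_nhds A₀ hr))) hf₀
  have hpow : Tendsto (fun s : ℕ => C * ‖w₁‖ ^ s) atTop (𝓝 0) := by
    simpa using (tendsto_pow_atTop_nhds_zero_of_lt_one (norm_nonneg _) hw₁1).const_mul C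
  filter_upwards [eventually_ne_atTop 0, hpow.eventually_lt_const (norm_pos_iff.mpr hβ),
    (tendsto_const_div_atTop_nhds_zero_nat (2 * Real.pi)).eventually_lt_const hδ]
    with s hs0 hsmall hsδ
  obtain ⟨A₁, hA₁, A₂, hA₂, h₁, h₂⟩ := exists_normSqGap_nonneg_and_nonpos
    (fun A hA => (hball A hA).2.2.2.1.le) (fun A hA => (hball A hA).2.2.2.2.le) hsub hβ hw₁0
    hw₁1.le hs0 hsδ hsmall.le
  have hcont : ContinuousOn (fun A => normSqGap (g A) (f A ^ s)) (ball A₀ r) := fun A hA => by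
    obtain ⟨-, hfA, hgA, -⟩ := hball A hA
    exact ContinuousAt.continuousWithinAt (by unfold normSqGap; fun_prop)
  obtain ⟨A, hA, hgap⟩ :=
    (convex_ball A₀ r).isPreconnected.intermediate_value hA₂ hA₁ hcont ⟨h₂, h₁⟩
  exact ⟨A, (hball A hA).1, normSqGap_eq_zero_iff.mp hgap⟩

noncomputable def kinkedThetaRatio (A : ℂ) : ℂ :=
  ((A + 1 + A⁻¹ + 1) * (A ^ 2)⁻¹ + 1) / -(A + 1 + A⁻¹)

theorem analyticAt_kinkedThetaRatio {A : ℂ} (hA : A ≠ 0) (hσ : A + 1 + A⁻¹ ≠ 0) :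
    AnalyticAt ℂ kinkedThetaRatio A := by
  unfold kinkedThetaRatio
  fun_prop (disch := first | assumption | exact neg_ne_zero.mpr hσ | exact pow_ne_zero _ hA)

theorem not_eventually_kinkedThetaRatio_eq {A₀ : ℂ} (hA₀ : A₀ ≠ 0) (hσ₀ : A₀ + 1 + A₀⁻¹ ≠ 0) :
    ¬∀ᶠ A in 𝓝 A₀, kinkedThetaRatio A = kinkedThetaRatio A₀ := by
  intro h
  set c := kinkedThetaRatio A₀
  -- clearing denominators in `kinkedThetaRatio A = c` gives a polynomial with constant term 1
  set p : Polynomial ℂ := (.X + 1) ^ 2 + .X ^ 3 + .C c * .X ^ 2 * (.X ^ 2 + .X + 1)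
  have hσ : ContinuousAt (fun A : ℂ => A + 1 + A⁻¹) A₀ := by fun_prop (disch := exact hA₀)
  have hroots : ∀ᶠ A in 𝓝 A₀, p.IsRoot A := by
    filter_upwards [h, eventually_ne_nhds hA₀, hσ.eventually_ne hσ₀] with A hcA hA hσA
    rw [kinkedThetaRatio, div_eq_iff (neg_ne_zero.mpr hσA)] at hcA
    field_simp at hcA
    simp only [p, Polynomial.IsRoot, Polynomial.eval_add, Polynomial.eval_mul, Polynomial.eval_pow,
      Polynomial.eval_X, Polynomial.eval_C, Polynomial.eval_one]
    linear_combination hcA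
  have hp : p = 0 := Polynomial.eq_zero_of_infinite_isRoot p (infinite_of_mem_nhds A₀ hroots)
  simpa [p] using congr_arg (Polynomial.eval 0) hp

theorem norm_kinkedThetaRatio_le_one {A : ℂ} (hσ : A + 1 + A⁻¹ ≠ 0)
    (h : ‖(A + 2 + A⁻¹) * (A ^ 2)⁻¹ + 1‖ ≤ ‖A + 1 + A⁻¹‖) : ‖kinkedThetaRatio A‖ ≤ 1 := by
  rw [kinkedThetaRatio, norm_div, norm_neg, div_le_one (norm_pos_iff.mpr hσ)]
  rwa [show A + 1 + A⁻¹ + 1 = A + 2 + A⁻¹ by ring]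

/-- For every `A₀ ≠ 0` with `σ₀ = A₀ + 1 + A₀⁻¹ ≠ 0` and
`|(A₀ + 2 + A₀⁻¹)·A₀⁻² + 1| ≤ |A₀ + 1 + A₀⁻¹|`, and every `ε > 0`, there exists `s₀`
such that for every integer `s ≥ s₀` there is `A ≠ 0` with `|A − A₀| < ε`,
`σ = A + 1 + A⁻¹ ≠ 0`, and
`|1 + σ·(((σ+1)A⁻² + 1)/(−σ))^s| = |1 − (((σ+1)A⁻² + 1)/(−σ))^s|`. -/
theorem limit_zeros_kinked_theta (A₀ : ℂ) (hA₀ : A₀ ≠ 0)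
    (hσ₀ : A₀ + 1 + A₀⁻¹ ≠ 0)
    (hreg : ‖(A₀ + 2 + A₀⁻¹) * (A₀ ^ 2)⁻¹ + 1‖ ≤
      ‖A₀ + 1 + A₀⁻¹‖)
    (ε : ℝ) (hε : 0 < ε) :
    ∃ s₀ : ℕ, ∀ s : ℕ, s₀ ≤ s →
      ∃ A : ℂ, A ≠ 0 ∧ ‖A - A₀‖ < ε ∧ A + 1 + A⁻¹ ≠ 0 ∧
        ‖1 + (A + 1 + A⁻¹) *
            ((((A + 1 + A⁻¹) + 1) * (A ^ 2)⁻¹ + 1) / (-(A + 1 + A⁻¹))) ^ s‖ =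
          ‖1 - ((((A + 1 + A⁻¹) + 1) * (A ^ 2)⁻¹ + 1) /
            (-(A + 1 + A⁻¹))) ^ s‖ := by
  by_cases hβ : A₀ + 1 + A₀⁻¹ + 1 = 0
  · refine ⟨0, fun s _ => ⟨A₀, hA₀, by simpa using hε, hσ₀, ?_⟩⟩
    rw [show A₀ + 1 + A₀⁻¹ = -1 by linear_combination hβ, neg_one_mul, ← sub_eq_add_neg]
  have hσ : ∀ᶠ A in 𝓝 A₀, ContinuousAt (fun A : ℂ => A + 1 + A⁻¹) A :=
    (eventually_ne_nhds hA₀).mono fun A hA => by fun_prop (disch := exact hA)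
  have hU : ∀ᶠ A in 𝓝 A₀, A ≠ 0 ∧ A + 1 + A⁻¹ ≠ 0 ∧ A ∈ ball A₀ ε :=
    (eventually_ne_nhds hA₀).and <| (hσ.self_of_nhds.eventually_ne hσ₀).and (ball_mem_nhds A₀ hε)
  obtain ⟨s₀, hs₀⟩ := eventually_atTop.mp <|
    eventually_exists_norm_one_add_mul_pow_eq_norm_one_sub_pow (analyticAt_kinkedThetaRatio hA₀ hσ₀)
      (not_eventually_kinkedThetaRatio_eq hA₀ hσ₀) hσ hβ (norm_kinkedThetaRatio_le_one hσ₀ hreg) hU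
  refine ⟨s₀, fun s hs => ?_⟩
  obtain ⟨A, ⟨hA, hσA, hAε⟩, heq⟩ := hs₀ s hs
  exact ⟨A, hA, by rwa [mem_ball, dist_eq_norm] at hAε, hσA, heq⟩
end
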